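/- arXiv:2502.11145 — 2 statements merged into one kernel-verified Lean document; each statement's English description precedes it below -/
import Mathlib

section
/- (Pappus–Guldin theorem for volume) Let f : [a,b] → ℝ be continuous and nonnegative with 0 ≤ a. The volume of the solid obtained by revolving the region {(x,y) : a ≤ x ≤ b, 0 ≤ y ≤ f x} about the y-axis equals 2π ∫_a^b x f(x) dx. -/
/-!
Slicing vertically, the volume is the integral of the height `f (√(u² + v²))` over the annulus
`a ≤ √(u² + v²) ≤ b`; in polar coordinates the Jacobian `r` turns this into `2π ∫ r f(r) dr`.
With lower Lebesgue integrals only measurability matters until the final comparison with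
the interval integral, so `f` is first replaced by a measurable function agreeing with it
on `[a, b]`.
-/

open MeasureTheory Real Set
open scoped ENNReal

theorem volume_region_between_cc_eq_lintegral {α : Type*} [MeasurableSpace α] {μ : Measure α}
    {f g : α → ℝ} {s : Set α} (hf : Measurable f) (hg : Measurable g) (hs : MeasurableSet s) :
    μ.prod volume {p : α × ℝ | p.1 ∈ s ∧ p.2 ∈ Icc (f p.1) (g p.1)} =
      ∫⁻ x in s, ENNReal.ofReal (g x - f x) ∂μ := by
  rw [Measure.prod_apply (measurableSet_region_between_cc hf hg hs), ← lintegral_indicator hs]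
  congr 1 with x
  by_cases hx : x ∈ s
  · simp only [indicator_of_mem hx, preimage_ofPred_eq, hx, true_and]
    exact Real.volume_Icc
  · simp [hx]

theorem lintegral_comp_sqrt_sq_add_sq {g : ℝ → ℝ≥0∞} (hg : Measurable g) :
    ∫⁻ q : ℝ × ℝ, g √(q.1 ^ 2 + q.2 ^ 2) =
      ENNReal.ofReal (2 * π) * ∫⁻ r in Ioi 0, ENNReal.ofReal r * g r := by
  have hradius : ∀ p ∈ polarCoord.target,
      √((polarCoord.symm p).1 ^ 2 + (polarCoord.symm p).2 ^ 2) = p.1 := by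
    rintro ⟨r, θ⟩ ⟨hr, -⟩
    simp [polarCoord_symm_apply, mul_pow, ← mul_add, cos_sq_add_sin_sq, sqrt_sq hr.le]
  calc ∫⁻ q : ℝ × ℝ, g √(q.1 ^ 2 + q.2 ^ 2)
      = ∫⁻ p in Ioi 0 ×ˢ Ioo (-π) π, ENNReal.ofReal p.1 * g p.1 := by
        rw [← lintegral_comp_polarCoord_symm]
        exact setLIntegral_congr_fun polarCoord.open_target.measurableSet
          fun p hp => by rw [smul_eq_mul, hradius p hp]
    _ = (∫⁻ r in Ioi 0, ENNReal.ofReal r * g r) * ∫⁻ _ in Ioo (-π) π, 1 := by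
        rw [Measure.volume_eq_prod, ← Measure.prod_restrict,
          ← lintegral_prod_mul (by fun_prop) aemeasurable_const]
        simp only [mul_one]
    _ = ENNReal.ofReal (2 * π) * ∫⁻ r in Ioi 0, ENNReal.ofReal r * g r := by
        rw [setLIntegral_const, one_mul, Real.volume_Ioo, mul_comm, sub_neg_eq_add, two_mul]

theorem volume_solid_of_revolution {s : Set ℝ} {f g : ℝ → ℝ} (hs : MeasurableSet s)
    (hf : Measurable f) (hg : Measurable g) :
    volume {p : ℝ × ℝ × ℝ | √(p.1 ^ 2 + p.2.1 ^ 2) ∈ s ∧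
        p.2.2 ∈ Icc (f √(p.1 ^ 2 + p.2.1 ^ 2)) (g √(p.1 ^ 2 + p.2.1 ^ 2))} =
      ENNReal.ofReal (2 * π) * ∫⁻ r in s ∩ Ici 0, ENNReal.ofReal (r * (g r - f r)) := by
  set ρ : ℝ × ℝ → ℝ := fun q => √(q.1 ^ 2 + q.2 ^ 2)
  have hρ : Measurable ρ := by fun_prop
  have hheight : Measurable fun r => ENNReal.ofReal (g r - f r) := by fun_prop
  rw [← volume_preserving_prodAssoc.measure_preimage_equiv, Measure.volume_eq_prod]
  change volume.prod volume
    {q : (ℝ × ℝ) × ℝ | q.1 ∈ ρ ⁻¹' s ∧ q.2 ∈ Icc (f (ρ q.1)) (g (ρ q.1))} = _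
  refine (volume_region_between_cc_eq_lintegral (hf.comp hρ) (hg.comp hρ)
    (hs.preimage hρ)).trans ?_
  rw [← lintegral_indicator (hs.preimage hρ)]
  change ∫⁻ q, (ρ ⁻¹' s).indicator ((fun r => ENNReal.ofReal (g r - f r)) ∘ ρ) q = _
  simp_rw [indicator_comp_right]
  rw [lintegral_comp_sqrt_sq_add_sq (hheight.indicator hs), setLIntegral_congr Ioi_ae_eq_Ici,
    ← setLIntegral_indicator hs]
  congr 1
  refine setLIntegral_congr_fun measurableSet_Ici fun r (hr : 0 ≤ r) => ?_
  by_cases hrs : r ∈ s <;> simp [hrs, ENNReal.ofReal_mul hr]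

theorem pappus_guldin (a b : ℝ) (ha : 0 ≤ a) (hab : a ≤ b) (f : ℝ → ℝ)
    (hf : ContinuousOn f (Set.Icc a b)) (hf0 : ∀ x ∈ Set.Icc a b, 0 ≤ f x) :
    volume {p : ℝ × ℝ × ℝ | a ≤ Real.sqrt (p.1 ^ 2 + p.2.1 ^ 2) ∧
        Real.sqrt (p.1 ^ 2 + p.2.1 ^ 2) ≤ b ∧ 0 ≤ p.2.2 ∧
        p.2.2 ≤ f (Real.sqrt (p.1 ^ 2 + p.2.1 ^ 2))}
      = ENNReal.ofReal (2 * π * ∫ x in a..b, x * f x) := by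
  set F := (Icc a b).piecewise f 0
  have hF : Measurable F := hf.measurable_piecewise continuousOn_const measurableSet_Icc
  have hFf : EqOn F f (Icc a b) := fun x hx => piecewise_eq_of_mem _ _ _ hx
  convert volume_solid_of_revolution measurableSet_Icc (measurable_const (a := (0 : ℝ))) hF
    using 1
  · congr 1 with p
    simp only [mem_ofPred_eq, mem_Icc, and_assoc]
    refine and_congr_right fun haρ => and_congr_right fun hρb => ?_
    rw [hFf ⟨haρ, hρb⟩]
  · have hint : IntegrableOn (fun x => x * f x) (Icc a b) :=
      (continuousOn_id.mul hf).integrableOn_Icc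
    have hnonneg : 0 ≤ᵐ[volume.restrict (Icc a b)] fun x => x * f x :=
      (ae_restrict_iff' measurableSet_Icc).2 <|
        .of_forall fun x hx => mul_nonneg (ha.trans hx.1) (hf0 x hx)
    rw [inter_eq_left.2 (Icc_subset_Ici_self.trans (Ici_subset_Ici.2 ha)),
      setLIntegral_congr_fun (g := fun x => ENNReal.ofReal (x * f x)) measurableSet_Icc
        fun x hx => by rw [sub_zero, hFf hx],
      ← ofReal_integral_eq_lintegral_ofReal hint hnonneg, ← ENNReal.ofReal_mul two_pi_pos.le,
      intervalIntegral.integral_of_le hab, integral_Icc_eq_integral_Ioc]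
end

section
/- The volume of a torus obtained by revolving a disk of radius r centered at distance R from the axis (with 0 < r ≤ R) equals 2π²Rr², i.e., the area of the disk (πr²) times the circumference (2πR) traversed by its center. -/
/-!
Cut the torus at height `z` with `z ^ 2 ≤ r ^ 2` and put `s = √(r ^ 2 - z ^ 2)`. The section is the
annulus of radii `R - s` and `R + s`, of area `π ((R + s) ^ 2 - (R - s) ^ 2) = 2πR · 2s`, and `2s`
is the length of the section of the generating disk at the same height. Cavalieri's principle
then gives volume = `2πR` · area of the disk = `2πR · πr ^ 2`.
-/

open MeasureTheory Real Metric Set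

theorem MeasureTheory.Measure.prod_apply_eq_mul_of_slices {α β γ : Type*} [MeasurableSpace α]
    [MeasurableSpace β] [MeasurableSpace γ] {μ : Measure α} {ν : Measure β} {ρ : Measure γ}
    [SFinite μ] [SFinite ν] [SFinite ρ] {s : Set (α × γ)} {t : Set (β × γ)}
    (hs : MeasurableSet s) (ht : MeasurableSet t) (c : ENNReal)
    (h : ∀ z, μ ((·, z) ⁻¹' s) = c * ν ((·, z) ⁻¹' t)) :
    μ.prod ρ s = c * ν.prod ρ t := by
  rw [Measure.prod_apply_symm hs, Measure.prod_apply_symm ht,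
    ← lintegral_const_mul c (measurable_measure_prodMk_right ht)]
  exact lintegral_congr h

theorem volume_setOf_sq_add_sq_eq_volume_setOf_sq_norm (P : ℝ → Prop) :
    volume {q : ℝ × ℝ | P (q.1 ^ 2 + q.2 ^ 2)} = volume {w : ℂ | P (‖w‖ ^ 2)} := by
  rw [← Complex.volume_preserving_equiv_real_prod.measure_preimage_equiv]
  congr 1
  ext w
  change P (w.re ^ 2 + w.im ^ 2) ↔ P (‖w‖ ^ 2)
  rw [Complex.sq_norm, Complex.normSq_apply, sq, sq]

theorem Real.volume_setOf_sq_le (t : ℝ) :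
    volume {x : ℝ | x ^ 2 ≤ t} = ENNReal.ofReal (2 * √t) := by
  rcases le_or_gt 0 t with ht | ht
  · have : {x : ℝ | x ^ 2 ≤ t} = Icc (-√t) √t := by ext; simp [Real.sq_le ht]
    rw [this, Real.volume_Icc]
    ring_nf
  · have : {x : ℝ | x ^ 2 ≤ t} = ∅ := eq_empty_of_forall_notMem fun x hx => by
      nlinarith [sq_nonneg x, hx.out]
    rw [this, Real.sqrt_eq_zero_of_nonpos ht.le]
    simp

theorem Complex.volume_closedBall_diff_ball (x : ℂ) {a b : ℝ} (ha : 0 ≤ a) (hab : a ≤ b) :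
    volume (closedBall x b \ ball x a) = ENNReal.ofReal (π * (b ^ 2 - a ^ 2)) := by
  rw [measure_sdiff (ball_subset_closedBall.trans (closedBall_subset_closedBall hab))
      measurableSet_ball.nullMeasurableSet measure_ball_lt_top.ne,
    Complex.volume_closedBall, Complex.volume_ball, ← ENNReal.ofReal_coe_nnreal,
    NNReal.coe_real_pi, ← ENNReal.ofReal_pow (ha.trans hab), ← ENNReal.ofReal_pow ha,
    ← ENNReal.ofReal_mul (by positivity), ← ENNReal.ofReal_mul (by positivity),
    ← ENNReal.ofReal_sub _ (by positivity)]
  ring_nf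

theorem Complex.volume_setOf_sq_norm_sub_le {R t : ℝ} (hR : 0 ≤ R) (ht : t ≤ R ^ 2) :
    volume {w : ℂ | (‖w‖ - R) ^ 2 ≤ t}
      = ENNReal.ofReal (2 * π * R) * volume {x : ℝ | x ^ 2 ≤ t} := by
  rw [Real.volume_setOf_sq_le]
  rcases le_or_gt 0 t with ht₀ | ht₀
  · obtain ⟨s, hs₀, rfl⟩ : ∃ s, 0 ≤ s ∧ t = s ^ 2 := ⟨√t, sqrt_nonneg t, (sq_sqrt ht₀).symm⟩
    have hsR : s ≤ R := (sq_le_sq₀ hs₀ hR).mp ht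
    have hannulus : {w : ℂ | (‖w‖ - R) ^ 2 ≤ s ^ 2} = closedBall 0 (R + s) \ ball 0 (R - s) := by
      ext w
      simp only [mem_ofPred_eq, sq_le_sq, abs_of_nonneg hs₀, abs_le, mem_sdiff,
        mem_closedBall_zero_iff, mem_ball_zero_iff, not_lt]
      constructor <;> intro h <;> constructor <;> linarith [h.1, h.2]
    rw [hannulus, Complex.volume_closedBall_diff_ball 0 (by linarith) (by linarith),
      Real.sqrt_sq hs₀, ← ENNReal.ofReal_mul (by positivity)]
    ring_nf
  · have : {w : ℂ | (‖w‖ - R) ^ 2 ≤ t} = ∅ := eq_empty_of_forall_notMem fun w hw => by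
      nlinarith [sq_nonneg (‖w‖ - R), hw.out]
    rw [this, Real.sqrt_eq_zero_of_nonpos ht₀.le]
    simp

theorem volume_setOf_sq_add_sq_le_sq {c : ℝ} (hc : 0 ≤ c) :
    volume {q : ℝ × ℝ | q.1 ^ 2 + q.2 ^ 2 ≤ c ^ 2} = ENNReal.ofReal (π * c ^ 2) := by
  refine (volume_setOf_sq_add_sq_eq_volume_setOf_sq_norm (· ≤ c ^ 2)).trans ?_
  have hdisk : {w : ℂ | ‖w‖ ^ 2 ≤ c ^ 2} = closedBall 0 c := by
    ext w
    simp [sq_le_sq₀ (norm_nonneg w) hc]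
  rw [hdisk, Complex.volume_closedBall, ← ENNReal.ofReal_coe_nnreal, NNReal.coe_real_pi,
    ← ENNReal.ofReal_pow hc, ← ENNReal.ofReal_mul (by positivity), mul_comm]

theorem volume_torus_slice {R r : ℝ} (hr : 0 ≤ r) (hrR : r ≤ R) (z : ℝ) :
    volume {q : ℝ × ℝ | (√(q.1 ^ 2 + q.2 ^ 2) - R) ^ 2 + z ^ 2 ≤ r ^ 2}
      = ENNReal.ofReal (2 * π * R) * volume {x : ℝ | x ^ 2 + z ^ 2 ≤ r ^ 2} := by
  simp only [← le_sub_iff_add_le]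
  refine (volume_setOf_sq_add_sq_eq_volume_setOf_sq_norm
    (fun u => (√u - R) ^ 2 ≤ r ^ 2 - z ^ 2)).trans ?_
  simp only [Real.sqrt_sq (norm_nonneg _)]
  exact Complex.volume_setOf_sq_norm_sub_le (hr.trans hrR) (by nlinarith)

theorem torus_volume (R r : ℝ) (hr : 0 < r) (hrR : r ≤ R) :
    volume {p : ℝ × ℝ × ℝ | (Real.sqrt (p.1 ^ 2 + p.2.1 ^ 2) - R) ^ 2 + p.2.2 ^ 2 ≤ r ^ 2}
      = ENNReal.ofReal (2 * π ^ 2 * R * r ^ 2) ∧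
    2 * π ^ 2 * R * r ^ 2 = (π * r ^ 2) * (2 * π * R) := by
  refine ⟨?_, by ring⟩
  have hR : 0 ≤ R := hr.le.trans hrR
  let torus : Set ((ℝ × ℝ) × ℝ) := {q | (√(q.1.1 ^ 2 + q.1.2 ^ 2) - R) ^ 2 + q.2 ^ 2 ≤ r ^ 2}
  let disk : Set (ℝ × ℝ) := {q | q.1 ^ 2 + q.2 ^ 2 ≤ r ^ 2}
  have htorus : MeasurableSet torus := (isClosed_le (by fun_prop) continuous_const).measurableSet
  have hdisk : MeasurableSet disk := (isClosed_le (by fun_prop) continuous_const).measurableSet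
  calc _ = volume torus := (volume_preserving_prodAssoc.symm _).measure_preimage_equiv torus
    _ = ENNReal.ofReal (2 * π * R) * volume disk := by
      rw [Measure.volume_eq_prod, Measure.volume_eq_prod]
      exact Measure.prod_apply_eq_mul_of_slices htorus hdisk _ (volume_torus_slice hr.le hrR)
    _ = _ := by
      rw [volume_setOf_sq_add_sq_le_sq hr.le, ← ENNReal.ofReal_mul (by positivity)]
      ring_nf
end
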